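/- For every collection C of pairwise vertex-disjoint circuits of a Klee-graph G, there exists a perfect matching M of G which contains at least one edge of every circuit in C. -/

import Mathlib

open SimpleGraph
open scoped Classical

/-- `H` is obtained from `G` by expanding the vertex `v` into a triangle. -/
def IsTriangleExpansion {V W : Type} (G : SimpleGraph V) (H : SimpleGraph W) : Prop :=
  ∃ (v : V) (t : Fin 3 → W) (g : {u : V // u ≠ v} → W) (σ : Fin 3 → {u : V // u ≠ v}),
    Function.Injective t ∧ Function.Injective g ∧
    (Set.range t ∩ Set.range g = ∅) ∧ (Set.range t ∪ Set.range g = Set.univ) ∧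
    Function.Injective σ ∧ (∀ i, G.Adj v (σ i).1) ∧
    (∀ u : {u : V // u ≠ v}, G.Adj v u.1 → u ∈ Set.range σ) ∧
    (∀ i j, H.Adj (t i) (t j) ↔ i ≠ j) ∧
    (∀ a b : {u : V // u ≠ v}, H.Adj (g a) (g b) ↔ G.Adj a.1 b.1) ∧
    (∀ i a, H.Adj (t i) (g a) ↔ a = σ i)

/-- Klee-graphs: `K₄` is Klee, and any triangle expansion of a Klee-graph is Klee. -/
inductive IsKlee : ∀ {V : Type}, SimpleGraph V → Prop
  | base {V : Type} (G : SimpleGraph V) (e : V ≃ Fin 4)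
      (h : ∀ a b : V, G.Adj a b ↔ a ≠ b) : IsKlee G
  | expand {V W : Type} (G : SimpleGraph V) (H : SimpleGraph W)
      (hG : IsKlee G) (h : IsTriangleExpansion G H) : IsKlee H

/-- A perfect matching given as a set of edges. -/
def IsPerfectMatchingSet {V : Type} (G : SimpleGraph V) (M : Set (Sym2 V)) : Prop :=
  M ⊆ G.edgeSet ∧ ∀ v : V, ∃! e : Sym2 V, e ∈ M ∧ v ∈ e

/-- A cubic (3-regular) graph. -/
def IsCubic {V : Type} (G : SimpleGraph V) : Prop :=
  ∀ v : V, (G.neighborSet v).ncard = 3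

/-- A circuit: a connected 2-regular subgraph. -/
def IsCircuitSub {V : Type} {G : SimpleGraph V} (C : G.Subgraph) : Prop :=
  C.coe.Connected ∧ ∀ v ∈ C.verts, (C.neighborSet v).ncard = 2

/-- A collection of pairwise vertex-disjoint circuits. -/
def IsDisjointCircuitCollection {V : Type} (G : SimpleGraph V) (𝒞 : Set G.Subgraph) : Prop :=
  (∀ C ∈ 𝒞, IsCircuitSub C) ∧ 𝒞.Pairwise fun C D => Disjoint C.verts D.verts

/-- The edge cut determined by a vertex set `A`. -/
def cutEdges {V : Type} (G : SimpleGraph V) (A : Set V) : Set (Sym2 V) :=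
  {e | e ∈ G.edgeSet ∧ ∃ a b : V, e = s(a, b) ∧ a ∈ A ∧ b ∉ A}

/-- `G` is cyclically `k`-edge-connected: every cyclic edge-cut has at least `k` edges. -/
def IsCyclicallyEdgeConnected {V : Type} (G : SimpleGraph V) (k : ℕ) : Prop :=
  ∀ A : Set V, ¬(G.induce A).IsAcyclic → ¬(G.induce Aᶜ).IsAcyclic →
    k ≤ (cutEdges G A).ncard

/-- A triangle of `G`, as a vertex set. -/
def IsTriangleSet {V : Type} (G : SimpleGraph V) (T : Set V) : Prop :=
  ∃ a b c : V, T = {a, b, c} ∧ G.Adj a b ∧ G.Adj a c ∧ G.Adj b c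

/-- An edge lying on a cycle of length `n`. -/
def LiesOnCycleOfLength {V : Type} [DecidableEq V] (G : SimpleGraph V) (e : Sym2 V) (n : ℕ) : Prop :=
  ∃ (a : V) (w : G.Walk a a), w.IsCycle ∧ w.length = n ∧ e ∈ w.edges

/-- The complement of `M` in `G` is a Hamiltonian cycle. -/
def ComplementIsHamCycle {V : Type} [DecidableEq V] (G : SimpleGraph V) (M : Set (Sym2 V)) : Prop :=
  ∃ (a : V) (w : G.Walk a a), w.IsHamiltonianCycle ∧ {e | e ∈ w.edges} = G.edgeSet \ M

/-- A `1⁺`-factor: a spanning set of edges with all degrees at least one. -/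
def Is1PlusFactor {V : Type} (G : SimpleGraph V) (F : Set (Sym2 V)) : Prop :=
  F ⊆ G.edgeSet ∧ ∀ v : V, ∃ e ∈ F, v ∈ e

/-- The Klee ladder `KL_{2k+2}`: the grid `P₂ □ P_k` together with two adjacent
vertices `inr 0` and `inr 1` joined to the first and last rung, respectively. -/
def kleeLadder (k : ℕ) : SimpleGraph ((Fin 2 × Fin k) ⊕ Fin 2) :=
  SimpleGraph.fromRel fun a b =>
    (∃ i j j', a = .inl (i, j) ∧ b = .inl (i, j') ∧ (j' : ℕ) = (j : ℕ) + 1) ∨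
    (∃ i i' j, a = .inl (i, j) ∧ b = .inl (i', j) ∧ i ≠ i') ∨
    (∃ i j, a = .inr 0 ∧ b = .inl (i, j) ∧ (j : ℕ) = 0) ∨
    (∃ i j, a = .inr 1 ∧ b = .inl (i, j) ∧ (j : ℕ) = k - 1) ∨
    (a = .inr 0 ∧ b = .inr 1)

/-- The ladder (`k`-sided prism) `L_{2k} = C_k □ K₂`. -/
def ladder (k : ℕ) : SimpleGraph (Fin 2 × ZMod k) :=
  SimpleGraph.fromRel fun a b => (a.1 = b.1 ∧ b.2 = a.2 + 1) ∨ (a.2 = b.2 ∧ a.1 ≠ b.1)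

/-- The Möbius ladder `ML_{2k}`: a `2k`-cycle plus all antipodal chords. -/
def mobiusLadder (k : ℕ) : SimpleGraph (ZMod (2 * k)) :=
  SimpleGraph.fromRel fun a b => b = a + 1 ∨ b = a + (k : ZMod (2 * k))

/-- The quasi-ladder `QL_{2m+4}`: the grid `P₂ □ P_m` together with a 4-cycle
on four new vertices `inr (i, 0)` (joined to the first rung) and
`inr (i, 1)` (joined to the last rung). -/
def quasiLadder (m : ℕ) : SimpleGraph ((Fin 2 × Fin m) ⊕ (Fin 2 × Fin 2)) :=
  SimpleGraph.fromRel fun a b =>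
    (∃ i j j', a = .inl (i, j) ∧ b = .inl (i, j') ∧ (j' : ℕ) = (j : ℕ) + 1) ∨
    (∃ i i' j, a = .inl (i, j) ∧ b = .inl (i', j) ∧ i ≠ i') ∨
    (∃ i i', a = .inr (i, 0) ∧ b = .inr (i', 1)) ∨
    (∃ i j, a = .inr (i, 0) ∧ b = .inl (i, j) ∧ (j : ℕ) = 0) ∨
    (∃ i j, a = .inr (i, 1) ∧ b = .inl (i, j) ∧ (j : ℕ) = m - 1)

/-- The graph obtained from `G` by deleting the endvertices `u, v` of an edge and
adding the edges `αβ` and `γδ`. -/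
def reducedGraph {V : Type} (G : SimpleGraph V) (u v α β γ δ : V) :
    SimpleGraph {x : V // x ≠ u ∧ x ≠ v} :=
  SimpleGraph.fromRel fun a b =>
    G.Adj a.1 b.1 ∨ (a.1 = α ∧ b.1 = β) ∨ (a.1 = γ ∧ b.1 = δ)

/-- The cyclic edge-connectivity of `G`. -/
noncomputable def cyclicEdgeConnectivity {V : Type} [Fintype V] (G : SimpleGraph V) : ℕ :=
  if ∃ A : Set V, ¬(G.induce A).IsAcyclic ∧ ¬(G.induce Aᶜ).IsAcyclic then
    sInf {n | ∃ A : Set V, ¬(G.induce A).IsAcyclic ∧ ¬(G.induce Aᶜ).IsAcyclic ∧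
      (cutEdges G A).ncard = n}
  else G.edgeSet.ncard - Fintype.card V + 1

/-!
Every Klee-graph has a Tait colouring `M 0, M 1, M 2` by perfect matchings in which `M 0 ∪ M 1`
is a Hamiltonian cycle. For `K₄` this is clear. If `H` expands the vertex `v` of `G` into a
triangle, label its corners so that the edge from `v` to `σ c` has colour `c`; colour `c` of `H`
then consists of the edges of `M c` away from `v`, the edge from corner `c` to `σ c`, and the side
of the triangle opposite corner `c`. The Hamiltonian cycle through `v` becomes one through the
triangle.

Either `M 2` meets every circuit of the collection, or some circuit avoids `M 2`. That circuit then
lies in the Hamiltonian cycle `M 0 ∪ M 1` and, being 2-regular, is all of it; by disjointness it is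
the only circuit, and `M 0` meets it.
-/

variable {V W : Type}

def IsMatchingSet (M : Set (Sym2 V)) : Prop :=
  ∀ ⦃v : V⦄ ⦃e e' : Sym2 V⦄, e ∈ M → e' ∈ M → v ∈ e → v ∈ e' → e = e'

namespace IsMatchingSet

variable {M N : Set (Sym2 V)}

theorem union (hM : IsMatchingSet M) (hN : IsMatchingSet N)
    (h : ∀ ⦃v e e'⦄, e ∈ M → e' ∈ N → v ∈ e → v ∉ e') : IsMatchingSet (M ∪ N) := by
  rintro v e e' (he | he) (he' | he') hv hv'
  · exact hM he he' hv hv'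
  · exact absurd hv' (h he he' hv)
  · exact absurd hv (h he' he hv')
  · exact hN he he' hv hv'

theorem preimage_map (hM : IsMatchingSet M) {f : W → V} (hf : f.Injective) :
    IsMatchingSet (Sym2.map f ⁻¹' M) := fun _ _ _ he he' hv hv' =>
  Sym2.map.injective hf (hM he he' (Sym2.mem_map.mpr ⟨_, hv, rfl⟩) (Sym2.mem_map.mpr ⟨_, hv', rfl⟩))

theorem image_map (hM : IsMatchingSet M) {f : V → W} (hf : f.Injective) :
    IsMatchingSet (Sym2.map f '' M) := by
  rintro w _ _ ⟨e, he, rfl⟩ ⟨e', he', rfl⟩ hw hw'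
  obtain ⟨a, ha, rfl⟩ := Sym2.mem_map.mp hw
  obtain ⟨a', ha', haa'⟩ := Sym2.mem_map.mp hw'
  rw [hM he he' ha (hf haa' ▸ ha')]

end IsMatchingSet

theorem isPerfectMatchingSet_iff {G : SimpleGraph V} {M : Set (Sym2 V)} :
    IsPerfectMatchingSet G M ↔ M ⊆ G.edgeSet ∧ IsMatchingSet M ∧ ∀ v, ∃ e ∈ M, v ∈ e := by
  refine ⟨fun h => ⟨h.1, fun v _ _ he he' hv hv' => (h.2 v).unique ⟨he, hv⟩ ⟨he', hv'⟩,
    fun v => (h.2 v).exists⟩, fun ⟨hsub, hM, hcov⟩ => ⟨hsub, fun v => ?_⟩⟩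
  obtain ⟨e, he, hv⟩ := hcov v
  exact ⟨e, ⟨he, hv⟩, fun e' ⟨he', hv'⟩ => hM he' he hv' hv⟩

namespace IsPerfectMatchingSet

variable {G : SimpleGraph V} {M M₁ M₂ : Set (Sym2 V)}

theorem isMatchingSet (hM : IsPerfectMatchingSet G M) : IsMatchingSet M :=
  (isPerfectMatchingSet_iff.mp hM).2.1

theorem exists_mem (hM : IsPerfectMatchingSet G M) (v : V) : ∃ w, s(v, w) ∈ M := by
  obtain ⟨e, ⟨he, hv⟩, -⟩ := hM.2 v
  obtain ⟨w, rfl⟩ := Sym2.mem_iff_exists.mp hv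
  exact ⟨w, he⟩

theorem eq_of_mem (hM : IsPerfectMatchingSet G M) {v w w' : V} (h : s(v, w) ∈ M)
    (h' : s(v, w') ∈ M) : w = w' :=
  Sym2.congr_right.mp (hM.isMatchingSet h h' (Sym2.mem_mk_left _ _) (Sym2.mem_mk_left _ _))

theorem encard_neighborSet_fromEdgeSet_union_le (h₁ : IsPerfectMatchingSet G M₁)
    (h₂ : IsPerfectMatchingSet G M₂) (v : V) :
    ((fromEdgeSet (M₁ ∪ M₂)).neighborSet v).encard ≤ 2 := by
  have hle : ∀ {M}, IsPerfectMatchingSet G M → {w | s(v, w) ∈ M}.encard ≤ 1 := fun hM =>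
    Set.encard_le_one_iff.mpr fun _ _ => hM.eq_of_mem
  calc _ ≤ ({w | s(v, w) ∈ M₁} ∪ {w | s(v, w) ∈ M₂}).encard := Set.encard_le_encard fun w hw => hw.1
    _ ≤ 1 + 1 := (Set.encard_union_le _ _).trans (add_le_add (hle h₁) (hle h₂))
    _ = 2 := by norm_num

theorem exists_mem_edgeSet_of_ncard_neighborSet_eq_two (h₂ : IsPerfectMatchingSet G M₂)
    {C : G.Subgraph} (hC : C.edgeSet ⊆ M₁ ∪ M₂) {u : V} (hu : (C.neighborSet u).ncard = 2) :
    ∃ e ∈ M₁, e ∈ C.edgeSet := by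
  obtain ⟨a, b, hab, hN⟩ := Set.ncard_eq_two.mp hu
  have ha : C.Adj u a := show a ∈ C.neighborSet u by simp [hN]
  have hb : C.Adj u b := show b ∈ C.neighborSet u by simp [hN]
  by_contra! h
  have hM₂ : ∀ {w}, C.Adj u w → s(u, w) ∈ M₂ := fun hw => (hC hw).resolve_left (h _ · hw)
  exact hab (h₂.eq_of_mem (hM₂ ha) (hM₂ hb))

end IsPerfectMatchingSet

theorem SimpleGraph.Preconnected.eq_univ_of_forall_adj_mem {K : SimpleGraph V}
    (hK : K.Preconnected) {S : Set V} (hS : S.Nonempty) (h : ∀ x ∈ S, ∀ y, K.Adj x y → y ∈ S) :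
    S = Set.univ := by
  obtain ⟨x, hx⟩ := hS
  refine Set.eq_univ_of_forall fun y => ?_
  induction (K.reachable_iff_reflTransGen x y).mp (hK x y) with
  | refl => exact hx
  | tail _ hab ih => exact h _ ih _ hab

theorem SimpleGraph.Subgraph.verts_eq_univ_of_adj_le {G K : SimpleGraph V} (hK : K.Connected)
    (hKdeg : ∀ v, (K.neighborSet v).encard ≤ 2) {C : G.Subgraph}
    (hCdeg : ∀ v ∈ C.verts, (C.neighborSet v).ncard = 2) (hCK : C.Adj ≤ K.Adj)
    (hC : C.verts.Nonempty) : C.verts = Set.univ := by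
  refine hK.preconnected.eq_univ_of_forall_adj_mem hC fun x hx y hxy => ?_
  have hfin : (C.neighborSet x).Finite := Set.finite_of_ncard_pos (by rw [hCdeg x hx]; norm_num)
  have hN : C.neighborSet x = K.neighborSet x :=
    hfin.eq_of_subset_of_encard_le (fun y hy => hCK _ _ hy)
      (by rw [← hfin.cast_ncard_eq, hCdeg x hx]; exact hKdeg x)
  rw [← SimpleGraph.mem_neighborSet, ← hN] at hxy
  exact hxy.snd_mem

theorem SimpleGraph.Reachable.lift {K : SimpleGraph V} {K' : SimpleGraph W} (φ : V → W)
    (hφ : ∀ u w, K.Adj u w → K'.Reachable (φ u) (φ w)) {u w : V} (h : K.Reachable u w) :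
    K'.Reachable (φ u) (φ w) := by
  rw [reachable_iff_reflTransGen] at h ⊢
  exact Relation.ReflTransGen.lift' φ (fun a b hab => (reachable_iff_reflTransGen _ _).mp
    (hφ a b hab)) u w h

/-- A Tait colouring (three disjoint perfect matchings covering all edges) whose colours `0` and
`1` form a Hamiltonian cycle. -/
structure IsHamiltonianTaitColoring (G : SimpleGraph V) (M : Fin 3 → Set (Sym2 V)) : Prop where
  isPerfectMatchingSet (c : Fin 3) : IsPerfectMatchingSet G (M c)
  pairwise_disjoint : Pairwise fun c c' => Disjoint (M c) (M c')
  edgeSet_subset : G.edgeSet ⊆ ⋃ c, M c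
  connected : (fromEdgeSet (M 0 ∪ M 1)).Connected

theorem IsHamiltonianTaitColoring.exists_isPerfectMatchingSet_meeting_circuits
    {G : SimpleGraph V} {M : Fin 3 → Set (Sym2 V)} (hM : IsHamiltonianTaitColoring G M)
    {𝒞 : Set G.Subgraph} (h𝒞 : IsDisjointCircuitCollection G 𝒞) :
    ∃ N, IsPerfectMatchingSet G N ∧ ∀ C ∈ 𝒞, ∃ f ∈ N, f ∈ C.edgeSet := by
  by_cases h₂ : ∀ C ∈ 𝒞, ∃ f ∈ M 2, f ∈ C.edgeSet
  · exact ⟨M 2, hM.isPerfectMatchingSet 2, h₂⟩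
  simp only [not_forall, not_exists, not_and] at h₂
  obtain ⟨C₀, hC₀, hmiss⟩ := h₂
  -- a circuit missing `M 2` lies in the Hamiltonian cycle `M 0 ∪ M 1`, so it is that cycle
  have hsub : C₀.edgeSet ⊆ M 0 ∪ M 1 := fun e he => by
    obtain ⟨c, hc⟩ := Set.mem_iUnion.mp (hM.edgeSet_subset (C₀.edgeSet_subset he))
    fin_cases c
    exacts [Or.inl hc, Or.inr hc, absurd he (hmiss e hc)]
  obtain ⟨hconn, hdeg⟩ := h𝒞.1 C₀ hC₀
  obtain ⟨⟨u, hu⟩⟩ := hconn.nonempty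
  have huniv : C₀.verts = Set.univ :=
    C₀.verts_eq_univ_of_adj_le hM.connected
      ((hM.isPerfectMatchingSet 0).encard_neighborSet_fromEdgeSet_union_le
        (hM.isPerfectMatchingSet 1))
      hdeg (fun _ _ h => (fromEdgeSet_adj _).mpr ⟨hsub h, h.ne⟩) ⟨u, hu⟩
  have honly : ∀ C ∈ 𝒞, C = C₀ := fun C hC => by
    by_contra hne
    obtain ⟨⟨x, hx⟩⟩ := (h𝒞.1 C hC).1.nonempty
    exact Set.disjoint_left.mp (h𝒞.2 hC hC₀ hne) hx (huniv ▸ Set.mem_univ x)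
  obtain ⟨e, he, heC⟩ := (hM.isPerfectMatchingSet 1).exists_mem_edgeSet_of_ncard_neighborSet_eq_two
    hsub (hdeg u hu)
  exact ⟨M 0, hM.isPerfectMatchingSet 0, fun C hC => honly C hC ▸ ⟨e, he, heC⟩⟩

section TriangleMatching

variable {t x : Fin 3 → W}

def triangleMatching (t x : Fin 3 → W) (c : Fin 3) : Set (Sym2 W) :=
  {s(t c, x c), s(t (c + 1), t (c + 2))}

theorem triangleMatching_subset_edgeSet {H : SimpleGraph W}
    (ht : ∀ i j, i ≠ j → H.Adj (t i) (t j)) (hx : ∀ c, H.Adj (t c) (x c)) (c : Fin 3) :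
    triangleMatching t x c ⊆ H.edgeSet := by
  rintro e (rfl | rfl)
  exacts [hx c, ht _ _ (by revert c; decide)]

theorem eq_or_exists_eq_of_mem_triangleMatching {c : Fin 3} {e : Sym2 W} {w : W}
    (he : e ∈ triangleMatching t x c) (hw : w ∈ e) : w = x c ∨ ∃ i, w = t i := by
  rcases he with rfl | rfl <;> rcases Sym2.mem_iff.mp hw with rfl | rfl
  exacts [Or.inr ⟨_, rfl⟩, Or.inl rfl, Or.inr ⟨_, rfl⟩, Or.inr ⟨_, rfl⟩]

theorem exists_t_mem_of_mem_triangleMatching {c : Fin 3} {e : Sym2 W}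
    (he : e ∈ triangleMatching t x c) : ∃ i, t i ∈ e := by
  rcases he with rfl | rfl
  exacts [⟨c, Sym2.mem_mk_left _ _⟩, ⟨c + 1, Sym2.mem_mk_left _ _⟩]

theorem exists_mem_triangleMatching (c i : Fin 3) : ∃ e ∈ triangleMatching t x c, t i ∈ e := by
  obtain rfl | rfl | rfl : i = c ∨ i = c + 1 ∨ i = c + 2 := by revert i c; decide
  exacts [⟨_, Or.inl rfl, Sym2.mem_mk_left _ _⟩, ⟨_, Or.inr rfl, Sym2.mem_mk_left _ _⟩,
    ⟨_, Or.inr rfl, Sym2.mem_mk_right _ _⟩]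

theorem exists_mem_triangleMatching_of_ne {i j : Fin 3} (hij : i ≠ j) :
    ∃ c, s(t i, t j) ∈ triangleMatching t x c := by
  obtain ⟨c, hc⟩ : ∃ c, s(i, j) = s(c + 1, c + 2) := by revert i j; decide
  exact ⟨c, Or.inr (congrArg (Sym2.map t) hc)⟩

theorem notMem_mk_of_forall_ne (hx : ∀ i j, t i ≠ x j) (c i j : Fin 3) : x c ∉ s(t i, t j) := by
  intro h
  rcases Sym2.mem_iff.mp h with h | h <;> exact hx _ _ h.symm

theorem isMatchingSet_triangleMatching (ht : t.Injective) (hx : ∀ i j, t i ≠ x j) (c : Fin 3) :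
    IsMatchingSet (triangleMatching t x c) := by
  have hdisj : ∀ w, w ∈ s(t c, x c) → w ∉ s(t (c + 1), t (c + 2)) := by
    have hc : c ≠ c + 1 ∧ c ≠ c + 2 := by revert c; decide
    rintro w hw hw'
    rcases Sym2.mem_iff.mp hw with rfl | rfl
    · rcases Sym2.mem_iff.mp hw' with h | h
      exacts [hc.1 (ht h), hc.2 (ht h)]
    · exact notMem_mk_of_forall_ne hx _ _ _ hw'
  rintro w e e' (rfl | rfl) (rfl | rfl) hw hw'
  exacts [rfl, absurd hw' (hdisj w hw), absurd hw (hdisj w hw'), rfl]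

theorem disjoint_triangleMatching (ht : t.Injective) (hx : ∀ i j, t i ≠ x j) {c c' : Fin 3}
    (hcc' : c ≠ c') : Disjoint (triangleMatching t x c) (triangleMatching t x c') := by
  have hside : s(c + 1, c + 2) ≠ s(c' + 1, c' + 2) := by revert c c'; decide
  rw [Set.disjoint_left]
  rintro e (rfl | rfl) (h | h)
  · rcases Sym2.eq_iff.mp h with ⟨h, -⟩ | ⟨h, -⟩
    exacts [hcc' (ht h), hx _ _ h]
  · exact notMem_mk_of_forall_ne hx _ _ _ (h ▸ Sym2.mem_mk_right _ _)
  · exact notMem_mk_of_forall_ne hx _ _ _ (h.symm ▸ Sym2.mem_mk_right _ _)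
  · exact hside (Sym2.map.injective ht h)

theorem reachable_of_triangleMatching_subset {S : Set (Sym2 W)} (ht : t.Injective)
    (hS : triangleMatching t x 0 ∪ triangleMatching t x 1 ⊆ S) (i : Fin 3) :
    (fromEdgeSet S).Reachable (t 0) (t i) := by
  have hadj : ∀ {i j}, i ≠ j → s(t i, t j) ∈ S → (fromEdgeSet S).Adj (t i) (t j) :=
    fun hij h => (fromEdgeSet_adj _).mpr ⟨h, ht.ne hij⟩
  have h12 := hadj (i := 1) (j := 2) (by decide) (hS (Or.inl (Or.inr rfl)))
  have h20 := hadj (i := 2) (j := 0) (by decide) (hS (Or.inr (Or.inr rfl)))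
  fin_cases i
  exacts [.rfl, (h12.reachable.trans h20.reachable).symm, h20.reachable.symm]

end TriangleMatching

theorem exists_isHamiltonianTaitColoring_of_equiv_fin_four {G : SimpleGraph V} (e : V ≃ Fin 4)
    (hG : ∀ a b, G.Adj a b ↔ a ≠ b) : ∃ M, IsHamiltonianTaitColoring G M := by
  -- view `K₄` as the triangle `t` together with a hub joined to all three corners
  set t : Fin 3 → V := fun i => e.symm i.castSucc
  set hub := e.symm (Fin.last 3)
  have ht : t.Injective := e.symm.injective.comp (Fin.castSucc_injective 3)
  have hx : ∀ i j : Fin 3, t i ≠ hub := fun i _ h =>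
    Fin.castSucc_ne_last i (e.symm.injective h)
  have hV : ∀ w, w = hub ∨ ∃ i, w = t i := fun w => by
    rcases Fin.eq_castSucc_or_eq_last (e w) with ⟨i, hi⟩ | h
    · exact Or.inr ⟨i, by simp [t, ← hi]⟩
    · exact Or.inl (by simp [hub, ← h])
  refine ⟨triangleMatching t fun _ => hub, fun c => ?_,
    fun c c' h => disjoint_triangleMatching ht hx h, fun f hf => ?_, ?_⟩
  · rw [isPerfectMatchingSet_iff]
    refine ⟨triangleMatching_subset_edgeSet (fun i j h => (hG _ _).mpr (ht.ne h))
      (fun i => (hG _ _).mpr (hx i i)) c, isMatchingSet_triangleMatching ht hx c, fun w => ?_⟩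
    rcases hV w with rfl | ⟨i, rfl⟩
    exacts [⟨_, Or.inl rfl, Sym2.mem_mk_right _ _⟩, exists_mem_triangleMatching c i]
  · induction f using Sym2.ind with | h a b => ?_
    rw [Set.mem_iUnion]
    rcases hV a with rfl | ⟨i, rfl⟩ <;> rcases hV b with rfl | ⟨j, rfl⟩
    · exact absurd hf G.irrefl
    · exact ⟨j, Or.inl Sym2.eq_swap⟩
    · exact ⟨i, Or.inl rfl⟩
    · exact exists_mem_triangleMatching_of_ne (ht.ne_iff.mp ((hG _ _).mp hf))
  · refine (connected_iff_exists_forall_reachable _).mpr ⟨t 0, fun w => ?_⟩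
    rcases hV w with rfl | ⟨i, rfl⟩
    · exact ((fromEdgeSet_adj _).mpr ⟨Or.inl (Or.inl rfl), hx 0 0⟩).reachable
    · exact reachable_of_triangleMatching_subset ht le_rfl i

/-- The data of `IsTriangleExpansion G H`: the vertex `v` of `G` is replaced by the triangle `t`,
whose corner `t i` takes over the edge from `v` to `σ i`. -/
structure TriangleExpansion (G : SimpleGraph V) (H : SimpleGraph W) where
  v : V
  t : Fin 3 → W
  g : {u : V // u ≠ v} → W
  σ : Fin 3 → {u : V // u ≠ v}
  t_injective : t.Injective
  g_injective : g.Injective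
  range_t_inter_range_g : Set.range t ∩ Set.range g = ∅
  range_t_union_range_g : Set.range t ∪ Set.range g = Set.univ
  σ_injective : σ.Injective
  adj_σ (i : Fin 3) : G.Adj v (σ i).1
  mem_range_σ (u : {u : V // u ≠ v}) : G.Adj v u.1 → u ∈ Set.range σ
  adj_t_t (i j : Fin 3) : H.Adj (t i) (t j) ↔ i ≠ j
  adj_g_g (a b : {u : V // u ≠ v}) : H.Adj (g a) (g b) ↔ G.Adj a.1 b.1
  adj_t_g (i : Fin 3) (a : {u : V // u ≠ v}) : H.Adj (t i) (g a) ↔ a = σ i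

theorem IsTriangleExpansion.nonempty {G : SimpleGraph V} {H : SimpleGraph W}
    (h : IsTriangleExpansion G H) : Nonempty (TriangleExpansion G H) := by
  obtain ⟨v, t, g, σ, h₁, h₂, h₃, h₄, h₅, h₆, h₇, h₈, h₉, h₁₀⟩ := h
  exact ⟨⟨v, t, g, σ, h₁, h₂, h₃, h₄, h₅, h₆, h₇, h₈, h₉, h₁₀⟩⟩

namespace TriangleExpansion

variable {G : SimpleGraph V} {H : SimpleGraph W} (X : TriangleExpansion G H)

theorem t_ne_g (i : Fin 3) (a : {u : V // u ≠ X.v}) : X.t i ≠ X.g a := fun h =>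
  (Set.eq_empty_iff_forall_notMem.mp X.range_t_inter_range_g) _ ⟨⟨i, rfl⟩, ⟨a, h.symm⟩⟩

theorem exists_eq_t_or_exists_eq_g (w : W) : (∃ i, w = X.t i) ∨ ∃ a, w = X.g a := by
  have hw : w ∈ Set.range X.t ∪ Set.range X.g := X.range_t_union_range_g ▸ Set.mem_univ w
  rcases hw with ⟨i, rfl⟩ | ⟨a, rfl⟩
  exacts [Or.inl ⟨i, rfl⟩, Or.inr ⟨a, rfl⟩]

def permute (π : Equiv.Perm (Fin 3)) : TriangleExpansion G H where
  v := X.v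
  t := X.t ∘ π
  g := X.g
  σ := X.σ ∘ π
  t_injective := X.t_injective.comp π.injective
  g_injective := X.g_injective
  range_t_inter_range_g := by rw [π.surjective.range_comp]; exact X.range_t_inter_range_g
  range_t_union_range_g := by rw [π.surjective.range_comp]; exact X.range_t_union_range_g
  σ_injective := X.σ_injective.comp π.injective
  adj_σ i := X.adj_σ (π i)
  mem_range_σ u hu := by rw [π.surjective.range_comp]; exact X.mem_range_σ u hu
  adj_t_t i j := (X.adj_t_t _ _).trans π.injective.ne_iff
  adj_g_g := X.adj_g_g
  adj_t_g i := X.adj_t_g (π i)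

theorem exists_perm_mem {M : Fin 3 → Set (Sym2 V)} (hM : ∀ c, IsPerfectMatchingSet G (M c))
    (hdisj : Pairwise fun c c' => Disjoint (M c) (M c')) :
    ∃ π : Equiv.Perm (Fin 3), ∀ c, s(X.v, (X.σ (π c)).1) ∈ M c := by
  have hpartner : ∀ c, ∃ i, s(X.v, (X.σ i).1) ∈ M c := fun c => by
    obtain ⟨w, hw⟩ := (hM c).exists_mem X.v
    have hadj : G.Adj X.v w := (hM c).1 hw
    obtain ⟨i, hi⟩ := X.mem_range_σ ⟨w, hadj.ne'⟩ hadj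
    exact ⟨i, by rwa [hi]⟩
  choose κ hκ using hpartner
  have hinj : κ.Injective := fun c c' h => by
    by_contra hne
    exact Set.disjoint_left.mp (hdisj hne) (hκ c) (h ▸ hκ c')
  exact ⟨Equiv.ofBijective κ (Finite.injective_iff_bijective.mp hinj), hκ⟩

/-- The edges of `M` away from `v`, as edges of `H`. -/
def lift (M : Set (Sym2 V)) : Set (Sym2 W) :=
  Sym2.map X.g '' (Sym2.map Subtype.val ⁻¹' M)

def expandMatching (M : Set (Sym2 V)) (c : Fin 3) : Set (Sym2 W) :=
  X.lift M ∪ triangleMatching X.t (X.g ∘ X.σ) c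

variable {X} {M M' : Set (Sym2 V)}

theorem mk_mem_lift {a b : {u : V // u ≠ X.v}} (h : s(a.1, b.1) ∈ M) :
    s(X.g a, X.g b) ∈ X.lift M :=
  ⟨s(a, b), h, rfl⟩

theorem lift_subset_edgeSet (hM : M ⊆ G.edgeSet) : X.lift M ⊆ H.edgeSet := by
  rintro _ ⟨f, hf, rfl⟩
  induction f using Sym2.ind with | h a b => exact (X.adj_g_g a b).mpr (hM hf)

theorem t_notMem_of_mem_lift {e : Sym2 W} (he : e ∈ X.lift M) (i : Fin 3) : X.t i ∉ e := by
  obtain ⟨f, -, rfl⟩ := he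
  intro hi
  obtain ⟨a, -, ha⟩ := Sym2.mem_map.mp hi
  exact X.t_ne_g i a ha.symm

theorem g_notMem_of_mem_lift (hM : IsMatchingSet M) {a : {u : V // u ≠ X.v}}
    (ha : s(X.v, a.1) ∈ M) {e : Sym2 W} (he : e ∈ X.lift M) : X.g a ∉ e := by
  obtain ⟨f, hf, rfl⟩ := he
  intro hg
  obtain ⟨a', ha', h⟩ := Sym2.mem_map.mp hg
  rw [X.g_injective h] at ha'
  have hf : s(X.v, a.1) = Sym2.map Subtype.val f :=
    hM ha hf (Sym2.mem_mk_right _ _) (Sym2.mem_map.mpr ⟨a, ha', rfl⟩)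
  obtain ⟨b, -, hb⟩ := Sym2.mem_map.mp (hf ▸ Sym2.mem_mk_left X.v a.1)
  exact b.2 hb

theorem exists_mem_lift (hM : IsPerfectMatchingSet G M) {a b : {u : V // u ≠ X.v}}
    (hb : s(X.v, b.1) ∈ M) (hab : a ≠ b) : ∃ e ∈ X.lift M, X.g a ∈ e := by
  obtain ⟨w, hw⟩ := hM.exists_mem a.1
  have hwv : w ≠ X.v := by
    rintro rfl
    exact hab (Subtype.ext (hM.eq_of_mem hb (Sym2.eq_swap ▸ hw)).symm)
  exact ⟨_, mk_mem_lift (b := ⟨w, hwv⟩) hw, Sym2.mem_mk_left _ _⟩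

theorem isMatchingSet_lift (hM : IsMatchingSet M) : IsMatchingSet (X.lift M) :=
  (hM.preimage_map Subtype.val_injective).image_map X.g_injective

theorem disjoint_lift (h : Disjoint M M') : Disjoint (X.lift M) (X.lift M') :=
  (Set.disjoint_image_iff (Sym2.map.injective X.g_injective)).mpr (h.preimage _)

theorem isPerfectMatchingSet_expandMatching (hM : IsPerfectMatchingSet G M) {c : Fin 3}
    (hv : s(X.v, (X.σ c).1) ∈ M) : IsPerfectMatchingSet H (X.expandMatching M c) := by
  have ht : ∀ i j, X.t i ≠ (X.g ∘ X.σ) j := fun i j => X.t_ne_g i (X.σ j)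
  rw [isPerfectMatchingSet_iff]
  refine ⟨Set.union_subset (lift_subset_edgeSet hM.1) (triangleMatching_subset_edgeSet
      (fun i j => (X.adj_t_t i j).mpr) (fun i => (X.adj_t_g i _).mpr rfl) c),
    (isMatchingSet_lift hM.isMatchingSet).union
      (isMatchingSet_triangleMatching X.t_injective ht c) ?_, fun w => ?_⟩
  · intro w e e' he he' hw hw'
    rcases eq_or_exists_eq_of_mem_triangleMatching he' hw' with rfl | ⟨i, rfl⟩
    exacts [g_notMem_of_mem_lift hM.isMatchingSet hv he hw, t_notMem_of_mem_lift he i hw]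
  · rcases X.exists_eq_t_or_exists_eq_g w with ⟨i, rfl⟩ | ⟨a, rfl⟩
    · obtain ⟨e, he, hw⟩ := exists_mem_triangleMatching (x := X.g ∘ X.σ) c i
      exact ⟨e, Or.inr he, hw⟩
    · by_cases ha : a = X.σ c
      · exact ⟨_, Or.inr (Or.inl rfl), ha ▸ Sym2.mem_mk_right _ _⟩
      · obtain ⟨e, he, hw⟩ := exists_mem_lift hM hv ha
        exact ⟨e, Or.inl he, hw⟩

theorem disjoint_expandMatching {M M' : Set (Sym2 V)} (h : Disjoint M M') {c c' : Fin 3}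
    (hcc' : c ≠ c') : Disjoint (X.expandMatching M c) (X.expandMatching M' c') := by
  have hlt : ∀ {N : Set (Sym2 V)} {c : Fin 3},
      Disjoint (X.lift N) (triangleMatching X.t (X.g ∘ X.σ) c) := by
    intro N c
    refine Set.disjoint_left.mpr fun e he he' => ?_
    obtain ⟨i, hi⟩ := exists_t_mem_of_mem_triangleMatching he'
    exact t_notMem_of_mem_lift he i hi
  simp only [expandMatching, Set.disjoint_union_left, Set.disjoint_union_right]
  exact ⟨⟨disjoint_lift h, hlt.symm⟩, hlt,
    disjoint_triangleMatching X.t_injective (fun i j => X.t_ne_g i _) hcc'⟩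

theorem edgeSet_subset_iUnion_expandMatching {M : Fin 3 → Set (Sym2 V)}
    (hM : G.edgeSet ⊆ ⋃ c, M c) : H.edgeSet ⊆ ⋃ c, X.expandMatching (M c) c := by
  intro f hf
  induction f using Sym2.ind with | h w w' => ?_
  rw [Set.mem_iUnion]
  have htg : ∀ i a, H.Adj (X.t i) (X.g a) → ∃ c, s(X.t i, X.g a) ∈ X.expandMatching (M c) c :=
    fun i a h => ⟨i, Or.inr (Or.inl (by rw [(X.adj_t_g i a).mp h]; rfl))⟩
  rcases X.exists_eq_t_or_exists_eq_g w with ⟨i, rfl⟩ | ⟨a, rfl⟩ <;>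
    rcases X.exists_eq_t_or_exists_eq_g w' with ⟨j, rfl⟩ | ⟨b, rfl⟩
  · obtain ⟨c, hc⟩ := exists_mem_triangleMatching_of_ne ((X.adj_t_t i j).mp hf)
    exact ⟨c, Or.inr hc⟩
  · exact htg i b hf
  · obtain ⟨c, hc⟩ := htg j a hf.symm
    exact ⟨c, Sym2.eq_swap ▸ hc⟩
  · have hab : s(a.1, b.1) ∈ G.edgeSet := (X.adj_g_g a b).mp hf
    obtain ⟨c, hc⟩ := Set.mem_iUnion.mp (hM hab)
    exact ⟨c, Or.inl (mk_mem_lift hc)⟩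

theorem connected_fromEdgeSet_expandMatching {M₀ M₁ : Set (Sym2 V)}
    (hM₀ : IsPerfectMatchingSet G M₀) (hM₁ : IsPerfectMatchingSet G M₁)
    (hv₀ : s(X.v, (X.σ 0).1) ∈ M₀) (hv₁ : s(X.v, (X.σ 1).1) ∈ M₁)
    (hconn : (fromEdgeSet (M₀ ∪ M₁)).Connected) :
    (fromEdgeSet (X.expandMatching M₀ 0 ∪ X.expandMatching M₁ 1)).Connected := by
  set K' := fromEdgeSet (X.expandMatching M₀ 0 ∪ X.expandMatching M₁ 1)
  have hadj : ∀ {w w'}, w ≠ w' → s(w, w') ∈ X.expandMatching M₀ 0 ∪ X.expandMatching M₁ 1 →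
      K'.Adj w w' := fun hne h => (fromEdgeSet_adj _).mpr ⟨h, hne⟩
  have htri : ∀ i, K'.Reachable (X.t 0) (X.t i) := reachable_of_triangleMatching_subset
    X.t_injective (Set.union_subset_union Set.subset_union_right Set.subset_union_right)
  have hcorner : ∀ {b : {u : V // u ≠ X.v}}, s(X.v, b.1) ∈ M₀ ∪ M₁ →
      K'.Reachable (X.t 0) (X.g b) := by
    rintro b (hb | hb)
    · rw [Subtype.ext (hM₀.eq_of_mem hb hv₀)]
      exact (hadj (X.t_ne_g _ _) (Or.inl (Or.inr (Or.inl rfl)))).reachable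
    · rw [Subtype.ext (hM₁.eq_of_mem hb hv₁)]
      exact (htri 1).trans (hadj (X.t_ne_g _ _) (Or.inr (Or.inr (Or.inl rfl)))).reachable
  -- contract the triangle back to `v`
  let φ : V → W := fun u => if h : u = X.v then X.t 0 else X.g ⟨u, h⟩
  have hφv : φ X.v = X.t 0 := dif_pos rfl
  have hφg : ∀ u (hu : u ≠ X.v), φ u = X.g ⟨u, hu⟩ := fun u hu => dif_neg hu
  have hφ : ∀ u w, (fromEdgeSet (M₀ ∪ M₁)).Adj u w → K'.Reachable (φ u) (φ w) := by
    intro u w huw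
    obtain ⟨hM, hne⟩ := (fromEdgeSet_adj _).mp huw
    by_cases hu : u = X.v
    · have hw : w ≠ X.v := fun hw => hne (hu.trans hw.symm)
      rw [hu, hφv, hφg w hw]
      exact hcorner (b := ⟨w, hw⟩) (show s(X.v, w) ∈ M₀ ∪ M₁ from hu ▸ hM)
    by_cases hw : w = X.v
    · rw [hw, hφv, hφg u hu]
      exact (hcorner (b := ⟨u, hu⟩)
        (show s(X.v, u) ∈ M₀ ∪ M₁ by rw [Sym2.eq_swap, ← hw]; exact hM)).symm
    rw [hφg u hu, hφg w hw]
    refine (hadj (X.g_injective.ne fun h => hne (congrArg Subtype.val h)) ?_).reachable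
    rcases hM with hM | hM
    exacts [Or.inl (Or.inl (mk_mem_lift hM)), Or.inr (Or.inl (mk_mem_lift hM))]
  refine (connected_iff_exists_forall_reachable _).mpr ⟨X.t 0, fun w => ?_⟩
  rcases X.exists_eq_t_or_exists_eq_g w with ⟨i, rfl⟩ | ⟨a, rfl⟩
  · exact htri i
  · rw [← hφv, ← hφg a.1 a.2]
    exact (hconn.preconnected X.v a.1).lift φ hφ

variable (X) in
theorem isHamiltonianTaitColoring_expandMatching {M : Fin 3 → Set (Sym2 V)}
    (hM : IsHamiltonianTaitColoring G M) (hv : ∀ c, s(X.v, (X.σ c).1) ∈ M c) :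
    IsHamiltonianTaitColoring H fun c => X.expandMatching (M c) c where
  isPerfectMatchingSet c := isPerfectMatchingSet_expandMatching (hM.isPerfectMatchingSet c) (hv c)
  pairwise_disjoint _ _ h := disjoint_expandMatching (hM.pairwise_disjoint h) h
  edgeSet_subset := edgeSet_subset_iUnion_expandMatching hM.edgeSet_subset
  connected := connected_fromEdgeSet_expandMatching (hM.isPerfectMatchingSet 0)
    (hM.isPerfectMatchingSet 1) (hv 0) (hv 1) hM.connected

end TriangleExpansion

theorem IsKlee.exists_isHamiltonianTaitColoring {G : SimpleGraph V} (hG : IsKlee G) :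
    ∃ M, IsHamiltonianTaitColoring G M := by
  induction hG with
  | base G e h => exact exists_isHamiltonianTaitColoring_of_equiv_fin_four e h
  | expand G H _ hGH ih =>
    obtain ⟨M, hM⟩ := ih
    obtain ⟨X⟩ := hGH.nonempty
    obtain ⟨π, hπ⟩ := X.exists_perm_mem hM.isPerfectMatchingSet hM.pairwise_disjoint
    exact ⟨_, (X.permute π).isHamiltonianTaitColoring_expandMatching hM hπ⟩

theorem klee_pm_hitting_circuits {V : Type} (G : SimpleGraph V) (hG : IsKlee G)
    (𝒞 : Set G.Subgraph) (h𝒞 : IsDisjointCircuitCollection G 𝒞) :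
    ∃ M : Set (Sym2 V), IsPerfectMatchingSet G M ∧ ∀ C ∈ 𝒞, ∃ f ∈ M, f ∈ C.edgeSet :=
  let ⟨_, hM⟩ := hG.exists_isHamiltonianTaitColoring
  hM.exists_isPerfectMatchingSet_meeting_circuits h𝒞
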